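/- Let n ≥ 2, a > 0, c > 0, and α = (α_1,…,α_n) ∈ (0,∞)^n with a α_k < 1 for all k. Let μ ∈ ℝ^n and let Σ ∈ ℝ^{n×n} be a symmetric positive semidefinite matrix. For parameters (a', α', μ', Σ') satisfying a' α'_k < 1, write Ψ_{a',α',μ',Σ'}(θ) := −a' Log(1 − i⟨α'⋄μ', θ⟩ + ½‖θ‖²_{α'⋄Σ'}) − Σ_{k=1}^n β'_k Log(1 − i α'_k μ'_k θ_k + ½ α'_k θ_k² Σ'_{kk}) with β'_k := (1 − a'α'_k)/α'_k. Then for all θ ∈ ℝ^n, c · Ψ_{a,α,μ,Σ}(θ) = Ψ_{ca, α/c, cμ, cΣ}(θ). (Note (ca)(α_k/c) = a α_k < 1, so the right-hand side is well defined.) -/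

import Mathlib

open MeasureTheory Complex

noncomputable section

/-- Euclidean inner product on `ℝ^n`. -/
def dot {n : ℕ} (x y : Fin n → ℝ) : ℝ := ∑ k, x k * y k

/-- Quadratic form `‖θ‖²_A = θ A θᵀ`. -/
def quad {n : ℕ} (A : Matrix (Fin n) (Fin n) ℝ) (θ : Fin n → ℝ) : ℝ :=
  ∑ k, ∑ l, θ k * A k l * θ l

/-- Outer product `t ⋄ μ` of vectors, `(t ⋄ μ)_k = t_k μ_k`. -/
def diaV {n : ℕ} (t μ : Fin n → ℝ) : Fin n → ℝ := fun k => t k * μ k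

/-- Outer product `t ⋄ Σ`, `(t ⋄ Σ)_{kl} = Σ_{kl} min(t_k, t_l)`. -/
def diaM {n : ℕ} (t : Fin n → ℝ) (A : Matrix (Fin n) (Fin n) ℝ) :
    Matrix (Fin n) (Fin n) ℝ := Matrix.of fun k l => A k l * min (t k) (t l)

/-- Lévy exponent of the weak variance-alpha-gamma process `WVAG^n(a, α, μ, Σ)`:
`Ψ(θ) = -a Log(1 - i⟨α⋄μ,θ⟩ + ½‖θ‖²_{α⋄Σ}) - ∑ₖ βₖ Log(1 - i αₖ μₖ θₖ + ½ αₖ θₖ² Σₖₖ)`,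
where `βₖ = (1 - a αₖ)/αₖ`. -/
def Ψwvag {n : ℕ} (a : ℝ) (α μ : Fin n → ℝ) (S : Matrix (Fin n) (Fin n) ℝ)
    (θ : Fin n → ℝ) : ℂ :=
  -(a : ℂ) * Complex.log (1 - Complex.I * (dot (diaV α μ) θ : ℂ) +
      (quad (diaM α S) θ : ℂ) / 2) -
    ∑ k, (((1 - a * α k) / α k : ℝ) : ℂ) *
      Complex.log (1 - Complex.I * ((α k * μ k * θ k : ℝ) : ℂ) +
        ((α k * θ k ^ 2 * S k k : ℝ) : ℂ) / 2)

/-! Replacing `α` by `α / c` and `(μ, Σ)` by `(c μ, c Σ)` leaves `α ⋄ μ`, `α ⋄ Σ` and every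
diagonal term `αₖ μₖ`, `αₖ Σₖₖ` unchanged, since `min` commutes with division by `c > 0`. Hence
both sides have the same logarithms, and only the weights change: `a ↦ c a`, `βₖ ↦ c βₖ`. -/

section Rescaling

variable {n : ℕ} {c : ℝ}

lemma div_mul_smul_apply (hc : c ≠ 0) (t x : Fin n → ℝ) (k : Fin n) :
    t k / c * (c • x) k = t k * x k := by
  rw [Pi.smul_apply, smul_eq_mul]
  field_simp

lemma diaV_div_smul (hc : c ≠ 0) (t μ : Fin n → ℝ) :
    diaV (fun k => t k / c) (c • μ) = diaV t μ :=
  funext (div_mul_smul_apply hc t μ)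

lemma diaM_div_smul (hc : 0 < c) (t : Fin n → ℝ) (A : Matrix (Fin n) (Fin n) ℝ) :
    diaM (fun k => t k / c) (c • A) = diaM t A := by
  ext k l
  simp only [diaM, Matrix.of_apply, Matrix.smul_apply, smul_eq_mul, min_div_div_right hc.le]
  field_simp

lemma one_sub_mul_div_div (hc : c ≠ 0) (a t : ℝ) :
    (1 - c * a * (t / c)) / (t / c) = c * ((1 - a * t) / t) := by
  rw [mul_right_comm, mul_div_cancel₀ _ hc, div_div_eq_mul_div]
  ring

end Rescaling

theorem stmt7 {n : ℕ} (a c : ℝ) (hc : 0 < c)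
    (α : Fin n → ℝ)
    (μ : Fin n → ℝ) (S : Matrix (Fin n) (Fin n) ℝ)
    (θ : Fin n → ℝ) :
    (c : ℂ) * Ψwvag a α μ S θ =
      Ψwvag (c * a) (fun k => α k / c) (c • μ) (c • S) θ := by
  have hdiag (k : Fin n) : α k / c * θ k ^ 2 * (c • S) k k = α k * θ k ^ 2 * S k k := by
    rw [Matrix.smul_apply, smul_eq_mul]
    field_simp
  simp only [Ψwvag, diaV_div_smul hc.ne', diaM_div_smul hc, div_mul_smul_apply hc.ne', hdiag,
    one_sub_mul_div_div hc.ne']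
  simp only [ofReal_mul, mul_assoc, ← Finset.mul_sum]
  ring
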